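/- Let k ≥ 2, let G be a k-dicritical digraph and let x ∈ V(G). Then N^{s+}(x) = ∅ if and only if N^{s−}(x) = ∅, where N^{s+}(x) = {y : (x,y) ∈ A(G) and (y,x) ∉ A(G)} is the set of out-neighbours of x joined to x by a simple arc, and N^{s−}(x) = {y : (y,x) ∈ A(G) and (x,y) ∉ A(G)} is the set of in-neighbours of x joined to x by a simple arc. -/

import Mathlib

/-- A (simple) digraph: a finite vertex set (of naturals) together with a finite
set of arcs between distinct vertices. -/
structure FDigraph where
  verts : Finset ℕ
  arcs : Finset (ℕ × ℕ)
  wf : ∀ a ∈ arcs, a.1 ∈ verts ∧ a.2 ∈ verts ∧ a.1 ≠ a.2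

namespace FDigraph

/-- Smart constructor: keeps only the legal arcs. -/
def mk' (V : Finset ℕ) (A : Finset (ℕ × ℕ)) : FDigraph where
  verts := V
  arcs := A.filter fun a => a.1 ∈ V ∧ a.2 ∈ V ∧ a.1 ≠ a.2
  wf := by
    intro a ha
    simp only [Finset.mem_filter] at ha
    exact ha.2

/-- A directed cycle, given as its (nonempty, duplicate-free) list of vertices:
every cyclically consecutive pair is an arc. -/
def IsDicycle (G : FDigraph) (l : List ℕ) : Prop :=
  l ≠ [] ∧ l.Nodup ∧ ∀ p ∈ l.zip (l.rotate 1), p ∈ G.arcs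

/-- A set of vertices is acyclic if it contains no directed cycle. -/
def AcyclicOn (G : FDigraph) (S : Set ℕ) : Prop :=
  ¬ ∃ l, G.IsDicycle l ∧ ∀ v ∈ l, v ∈ S

/-- A `k`-dicolouring: colours `0, …, k-1`, every colour class acyclic. -/
def IsDicolouring (G : FDigraph) (k : ℕ) (φ : ℕ → ℕ) : Prop :=
  (∀ v ∈ G.verts, φ v < k) ∧ ∀ c, G.AcyclicOn {v | φ v = c}

/-- The dichromatic number. -/
noncomputable def dichi (G : FDigraph) : ℕ := sInf {k | ∃ φ, G.IsDicolouring k φ}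

/-- Subdigraph relation. -/
def Subdigraph (H G : FDigraph) : Prop := H.verts ⊆ G.verts ∧ H.arcs ⊆ G.arcs

/-- `G` is `k`-dicritical. -/
def Dicritical (G : FDigraph) (k : ℕ) : Prop :=
  G.dichi = k ∧ ∀ H, Subdigraph H G → H ≠ G → H.dichi ≤ k - 1

/-- Induced subdigraph on a finite set of vertices. -/
def induce (G : FDigraph) (S : Finset ℕ) : FDigraph := mk' (G.verts ∩ S) G.arcs

def outDeg (G : FDigraph) (v : ℕ) : ℕ := (G.arcs.filter fun a => a.1 = v).card
def inDeg (G : FDigraph) (v : ℕ) : ℕ := (G.arcs.filter fun a => a.2 = v).card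
def deg (G : FDigraph) (v : ℕ) : ℕ := G.outDeg v + G.inDeg v

/-- Weak adjacency: an arc in either direction. -/
def wadj (G : FDigraph) (u v : ℕ) : Prop := (u, v) ∈ G.arcs ∨ (v, u) ∈ G.arcs

/-- Weak reachability. -/
def WReach (G : FDigraph) : ℕ → ℕ → Prop := Relation.ReflTransGen G.wadj

/-- A digraph is connected when its underlying graph is connected
(the empty digraph counts as connected). -/
def Connected (G : FDigraph) : Prop := ∀ u ∈ G.verts, ∀ v ∈ G.verts, G.WReach u v

/-- The set of connected components. -/
def components (G : FDigraph) : Set (Set ℕ) :=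
  {C | ∃ v ∈ G.verts, C = {u | u ∈ G.verts ∧ G.WReach v u}}

/-- The number of connected components. -/
noncomputable def numComponents (G : FDigraph) : ℕ := G.components.ncard

/-- Isomorphism of digraphs. -/
def Iso (G H : FDigraph) : Prop :=
  ∃ f : ℕ → ℕ, Set.BijOn f ↑G.verts ↑H.verts ∧
    ∀ u ∈ G.verts, ∀ v ∈ G.verts, ((u, v) ∈ G.arcs ↔ (f u, f v) ∈ H.arcs)

/-- The bidirected (complete) digraph `↔K_n`. -/
def completeD (n : ℕ) : FDigraph := mk' (Finset.range n) (Finset.range n ×ˢ Finset.range n)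

/-- The directed cycle `C⃗_n`. -/
def dirCycle (n : ℕ) : FDigraph :=
  mk' (Finset.range n)
    ((Finset.range n ×ˢ Finset.range n).filter fun a => a.2 = (a.1 + 1) % n)

/-- The bidirected cycle `↔C_n`. -/
def biCycle (n : ℕ) : FDigraph :=
  mk' (Finset.range n)
    ((Finset.range n ×ˢ Finset.range n).filter fun a =>
      a.2 = (a.1 + 1) % n ∨ a.1 = (a.2 + 1) % n)

/-- The Dirac join of `↔K_{k-2}` (on `{0,…,k-3}`) and the directed triangle
`C⃗_3` (on `{k-2, k-1, k}`). -/
def diracJoinExample (k : ℕ) : FDigraph :=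
  mk' (Finset.range (k + 1))
    ((Finset.range (k + 1) ×ˢ Finset.range (k + 1)).filter fun a =>
      a.1 < k - 2 ∨ a.2 < k - 2 ∨ a.2 = (if a.1 = k then k - 2 else a.1 + 1))

end FDigraph

/-!
Delete a simple in-arc `(y, x)` from a `k`-dicritical digraph `G`. The rest has a
`(k-1)`-dicolouring `φ`, which cannot dicolour `G`, so `G` has a `φ`-monochromatic dicycle
through `(y, x)`. Its arc leaving `x` goes to some `z ≠ y`; if `(x, z)` were not simple, the digon
`x z x` would survive the deletion and be monochromatic. The other direction is symmetric, using
the arc of the dicycle entering `x`.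
-/

namespace FDigraph

variable {G : FDigraph} {l : List ℕ}

lemma mem_of_mem_zip_rotate {p : ℕ × ℕ} (hp : p ∈ l.zip (l.rotate 1)) : p.1 ∈ l ∧ p.2 ∈ l :=
  ⟨(List.of_mem_zip hp).1, List.mem_rotate.1 (List.of_mem_zip hp).2⟩

lemma IsDicycle.exists_succ (hl : G.IsDicycle l) {x : ℕ} (hx : x ∈ l) :
    ∃ z ∈ l, (x, z) ∈ G.arcs := by
  have hfst : (l.zip (l.rotate 1)).map Prod.fst = l := List.map_fst_zip (by simp)
  obtain ⟨p, hp, rfl⟩ := List.mem_map.1 (hfst ▸ hx)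
  exact ⟨p.2, (mem_of_mem_zip_rotate hp).2, hl.2.2 p hp⟩

lemma IsDicycle.exists_pred (hl : G.IsDicycle l) {x : ℕ} (hx : x ∈ l) :
    ∃ z ∈ l, (z, x) ∈ G.arcs := by
  have hsnd : (l.zip (l.rotate 1)).map Prod.snd = l.rotate 1 := List.map_snd_zip (by simp)
  obtain ⟨p, hp, rfl⟩ := List.mem_map.1 (hsnd ▸ List.mem_rotate.2 hx)
  exact ⟨p.1, (mem_of_mem_zip_rotate hp).1, hl.2.2 p hp⟩

lemma isDicycle_pair {x z : ℕ} (hxz : (x, z) ∈ G.arcs) (hzx : (z, x) ∈ G.arcs) :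
    G.IsDicycle [x, z] := by
  have hne : x ≠ z := (G.wf _ hxz).2.2
  refine ⟨List.cons_ne_nil _ _, by simpa using hne, ?_⟩
  show ∀ p ∈ [(x, z), (z, x)], p ∈ G.arcs
  simpa using ⟨hxz, hzx⟩

lemma IsDicolouring.ne_of_digon {n : ℕ} {φ : ℕ → ℕ} (hφ : G.IsDicolouring n φ) {x z : ℕ}
    (hxz : (x, z) ∈ G.arcs) (hzx : (z, x) ∈ G.arcs) : φ x ≠ φ z := by
  intro h
  refine hφ.2 (φ x) ⟨[x, z], isDicycle_pair hxz hzx, ?_⟩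
  simp [h]

-- Colour every vertex by its own label: colour classes are singletons.
lemma exists_isDicolouring (G : FDigraph) : ∃ n φ, G.IsDicolouring n φ := by
  refine ⟨G.verts.sup id + 1, id, fun v hv => Nat.lt_succ_of_le (G.verts.le_sup (f := id) hv),
    fun c ⟨l, hl, hmem⟩ => ?_⟩
  obtain ⟨v, hv⟩ := List.exists_mem_of_ne_nil l hl.1
  obtain ⟨z, hz, hvz⟩ := hl.exists_succ hv
  exact (G.wf _ hvz).2.2 ((hmem v hv).trans (hmem z hz).symm)

lemma exists_isDicolouring_of_dichi_le {n : ℕ} (h : G.dichi ≤ n) :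
    ∃ φ, G.IsDicolouring n φ := by
  obtain ⟨m, φ, hφ⟩ := G.exists_isDicolouring
  obtain ⟨ψ, hψ⟩ := Nat.sInf_mem (s := {n | ∃ φ, G.IsDicolouring n φ}) ⟨m, φ, hφ⟩
  exact ⟨ψ, fun v hv => (hψ.1 v hv).trans_le h, hψ.2⟩

lemma dichi_le_of_isDicolouring {n : ℕ} {φ : ℕ → ℕ} (h : G.IsDicolouring n φ) : G.dichi ≤ n :=
  Nat.sInf_le ⟨φ, h⟩

def deleteArc (G : FDigraph) (e : ℕ × ℕ) : FDigraph :=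
  ⟨G.verts, G.arcs.erase e, fun a ha => G.wf a (Finset.mem_of_mem_erase ha)⟩

lemma mem_deleteArc_arcs {e a : ℕ × ℕ} : a ∈ (G.deleteArc e).arcs ↔ a ≠ e ∧ a ∈ G.arcs :=
  Finset.mem_erase

lemma deleteArc_subdigraph (e : ℕ × ℕ) : (G.deleteArc e).Subdigraph G :=
  ⟨subset_rfl, Finset.erase_subset e G.arcs⟩

lemma deleteArc_ne {e : ℕ × ℕ} (he : e ∈ G.arcs) : G.deleteArc e ≠ G := fun h => by
  rw [← h] at he
  exact Finset.notMem_erase e G.arcs he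

variable {k : ℕ}

lemma Dicritical.exists_monochromatic_dicycle_through_arc (hG : G.Dicritical k) (hk : 1 ≤ k)
    {e : ℕ × ℕ} (he : e ∈ G.arcs) :
    ∃ φ, (G.deleteArc e).IsDicolouring (k - 1) φ ∧
      ∃ l, G.IsDicycle l ∧ e ∈ l.zip (l.rotate 1) ∧ ∀ v ∈ l, φ v = φ e.1 := by
  obtain ⟨φ, hφ⟩ := exists_isDicolouring_of_dichi_le
    (hG.2 _ (deleteArc_subdigraph e) (deleteArc_ne he))
  refine ⟨φ, hφ, ?_⟩
  have hnot : ¬ G.IsDicolouring (k - 1) φ := fun h => by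
    have := hG.1 ▸ dichi_le_of_isDicolouring h
    omega
  obtain ⟨c, hc⟩ := not_forall.1 fun h => hnot ⟨hφ.1, h⟩
  obtain ⟨l, hl, hmono⟩ := not_not.1 hc
  have he' : e ∈ l.zip (l.rotate 1) := by
    by_contra he'
    refine hφ.2 c ⟨l, ⟨hl.1, hl.2.1, fun p hp => ?_⟩, hmono⟩
    exact mem_deleteArc_arcs.2 ⟨fun hpe => he' (hpe ▸ hp), hl.2.2 p hp⟩
  have he1 : φ e.1 = c := hmono _ (mem_of_mem_zip_rotate he').1
  exact ⟨l, hl, he', fun v hv => (hmono v hv).trans he1.symm⟩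

lemma Dicritical.exists_simple_out_of_simple_in (hG : G.Dicritical k) (hk : 1 ≤ k) {x y : ℕ}
    (hyx : (y, x) ∈ G.arcs) (hxy : (x, y) ∉ G.arcs) :
    ∃ z, (x, z) ∈ G.arcs ∧ (z, x) ∉ G.arcs := by
  obtain ⟨φ, hφ, l, hl, he, hmono⟩ := hG.exists_monochromatic_dicycle_through_arc hk hyx
  have hxl : x ∈ l := (mem_of_mem_zip_rotate he).2
  obtain ⟨z, hzl, hxz⟩ := hl.exists_succ hxl
  refine ⟨z, hxz, fun hzx => hφ.ne_of_digon ?_ ?_ ((hmono x hxl).trans (hmono z hzl).symm)⟩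
  · exact mem_deleteArc_arcs.2 ⟨fun h => (G.wf _ hyx).2.2 (congrArg Prod.fst h).symm, hxz⟩
  · exact mem_deleteArc_arcs.2 ⟨fun h => by cases h; exact hxy hxz, hzx⟩

lemma Dicritical.exists_simple_in_of_simple_out (hG : G.Dicritical k) (hk : 1 ≤ k) {x y : ℕ}
    (hxy : (x, y) ∈ G.arcs) (hyx : (y, x) ∉ G.arcs) :
    ∃ z, (z, x) ∈ G.arcs ∧ (x, z) ∉ G.arcs := by
  obtain ⟨φ, hφ, l, hl, he, hmono⟩ := hG.exists_monochromatic_dicycle_through_arc hk hxy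
  have hxl : x ∈ l := (mem_of_mem_zip_rotate he).1
  obtain ⟨z, hzl, hzx⟩ := hl.exists_pred hxl
  refine ⟨z, hzx, fun hxz => hφ.ne_of_digon ?_ ?_ ((hmono x hxl).trans (hmono z hzl).symm)⟩
  · exact mem_deleteArc_arcs.2 ⟨fun h => by cases h; exact hyx hzx, hxz⟩
  · exact mem_deleteArc_arcs.2 ⟨fun h => (G.wf _ hxy).2.2 (congrArg Prod.snd h), hzx⟩

end FDigraph

theorem simple_out_iff_simple_in_general (k : ℕ) (hk : 2 ≤ k) (G : FDigraph)
    (hG : G.Dicritical k) (x : ℕ) :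
    ({y | (x, y) ∈ G.arcs ∧ (y, x) ∉ G.arcs} = (∅ : Set ℕ)) ↔
      ({y | (y, x) ∈ G.arcs ∧ (x, y) ∉ G.arcs} = (∅ : Set ℕ)) := by
  have hk1 : 1 ≤ k := by omega
  simp only [Set.eq_empty_iff_forall_notMem, Set.mem_ofPred_eq, not_and, not_not]
  constructor
  · intro hout y hyx
    by_contra hxy
    obtain ⟨z, hxz, hzx⟩ := hG.exists_simple_out_of_simple_in hk1 hyx hxy
    exact hzx (hout z hxz)
  · intro hin y hxy
    by_contra hyx
    obtain ⟨z, hzx, hxz⟩ := hG.exists_simple_in_of_simple_out hk1 hxy hyx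
    exact hxz (hin z hzx)

/-- in a `k`-dicritical digraph, a vertex has a simple out-arc iff
it has a simple in-arc. -/
theorem simple_out_iff_simple_in (k : ℕ) (hk : 2 ≤ k) (G : FDigraph)
    (hG : G.Dicritical k) (x : ℕ) (hx : x ∈ G.verts) :
    ({y | (x, y) ∈ G.arcs ∧ (y, x) ∉ G.arcs} = (∅ : Set ℕ)) ↔
      ({y | (y, x) ∈ G.arcs ∧ (x, y) ∉ G.arcs} = (∅ : Set ℕ)) :=
  simple_out_iff_simple_in_general k hk G hG x
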